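/- arXiv:1705.05457 — 4 statements merged into one kernel-verified Lean document; each statement's English description precedes it below -/
import Mathlib

section
/- Let f : G → ℂ be an element of a commutative unital semisimple Banach algebra of functions on a set G (with pointwise operations, containing the constants, and with point evaluations being multiplicative functionals), and let λ be an isolated point of σ(f). Then there exists x ∈ G with f(x) = λ. -/
open Metric Set Complex

/-- In a commutative unital semisimple Banach algebra of complex-valued
functions on a set `G` (realized via an injective algebra homomorphism `T` into `G → ℂ`,
so that point evaluations are characters), every isolated point of the spectrum of an
element `f` is attained as a value of `f`. -/
theorem stmt0 {A G : Type*} [NormedCommRing A] [NormedAlgebra ℂ A] [CompleteSpace A]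
    [Nontrivial A]
    (T : A →ₐ[ℂ] (G → ℂ)) (hT : Function.Injective T)
    (f : A) (lam : ℂ) (hmem : lam ∈ spectrum ℂ f)
    (hiso : ∃ U : Set ℂ, IsOpen U ∧ U ∩ spectrum ℂ f = {lam}) :
    ∃ x : G, T f x = lam := by
  by_contra h
  push_neg at h
  obtain ⟨U, hUo, hU⟩ := hiso
  have hlamU : lam ∈ U := by
    have : lam ∈ U ∩ spectrum ℂ f := hU ▸ rfl
    exact this.1
  obtain ⟨ε, hε, hball⟩ := Metric.isOpen_iff.mp hUo lam hlamU
  set r : ℝ := ε / 2 with hr_def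
  have hr : 0 < r := by positivity
  have hrε : r < ε := by
    rw [hr_def]; linarith
  -- points of U other than lam are not in the spectrum
  have hUspec : ∀ z : ℂ, z ∈ U → z ≠ lam → z ∉ spectrum ℂ f := by
    intro z hzU hzne hz
    exact hzne (by simpa using (hU ▸ Set.mem_inter hzU hz : z ∈ ({lam} : Set ℂ)))
  -- points on the circle are in the resolvent set
  have hsphere : ∀ z : ℂ, z ∈ sphere lam r → z ∉ spectrum ℂ f := by
    intro z hz
    have hzU : z ∈ U := hball (by
      have : dist z lam = r := mem_sphere.mp hz
      exact mem_ball.mpr (by rw [this]; exact hrε))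
    have hzne : z ≠ lam := by
      intro hzeq
      have : dist z lam = r := mem_sphere.mp hz
      rw [hzeq, dist_self] at this
      exact hr.ne this
    exact hUspec z hzU hzne
  -- resolvent function
  set g : ℂ → A := fun z => Ring.inverse (algebraMap ℂ A z - f) with hg_def
  -- key: applying a character under the circle integral
  have key : ∀ φ : A →ₐ[ℂ] ℂ,
      φ (∮ z in C(lam, r), g z) = ∮ z in C(lam, r), (z - φ f)⁻¹ := by
    intro φ
    have hφg : ∀ z : ℂ, z ∈ sphere lam r → φ (g z) = (z - φ f)⁻¹ := by
      intro z hz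
      have hu : IsUnit (algebraMap ℂ A z - f) := spectrum.notMem_iff.mp (hsphere z hz)
      obtain ⟨u, hu'⟩ := hu
      have h1 : φ ↑u * φ ↑u⁻¹ = 1 := by
        rw [← map_mul, Units.mul_inv, map_one]
      have h2 : φ ↑u = z - φ f := by
        rw [hu', map_sub, AlgHomClass.commutes]
        simp [Algebra.algebraMap_self]
      have h3 : g z = ↑u⁻¹ := by rw [hg_def]; simp only [← hu', Ring.inverse_unit, one_divp]
      rw [h2] at h1
      rw [h3]
      exact eq_inv_of_mul_eq_one_right h1
    -- continuity of the integrand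
    have hcont : Continuous fun θ : ℝ =>
        deriv (circleMap lam r) θ • g (circleMap lam r θ) := by
      have hmap : Continuous fun θ : ℝ => circleMap lam r θ := continuous_circleMap _ _
      have hginner : ∀ θ : ℝ, ContinuousAt (fun θ : ℝ => g (circleMap lam r θ)) θ := by
        intro θ
        have hz : circleMap lam r θ ∈ sphere lam r := circleMap_mem_sphere _ hr.le _
        have hu : IsUnit (algebraMap ℂ A (circleMap lam r θ) - f) :=
          spectrum.notMem_iff.mp (hsphere _ hz)
        obtain ⟨u, hu'⟩ := hu
        have : ContinuousAt Ring.inverse ((u : A)) := NormedRing.inverse_continuousAt u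
        have hc2 : ContinuousAt (fun θ : ℝ => algebraMap ℂ A (circleMap lam r θ) - f) θ :=
          (((continuous_algebraMap ℂ A).comp hmap).sub continuous_const).continuousAt
        rw [hu'] at this
        have hcomp : ContinuousAt
            (Ring.inverse ∘ fun θ : ℝ => algebraMap ℂ A (circleMap lam r θ) - f) θ :=
          ContinuousAt.comp (g := Ring.inverse)
            (f := fun θ : ℝ => algebraMap ℂ A (circleMap lam r θ) - f) (x := θ) this hc2
        simpa [hg_def, Function.comp_def] using hcomp
      have : Continuous fun θ : ℝ => g (circleMap lam r θ) :=
        continuous_iff_continuousAt.mpr hginner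
      have hd : Continuous fun θ : ℝ => deriv (circleMap lam r) θ := by
        simp only [deriv_circleMap]
        exact (continuous_circleMap 0 r).mul continuous_const
      exact hd.smul this
    have hint : IntervalIntegrable
        (fun θ : ℝ => deriv (circleMap lam r) θ • g (circleMap lam r θ))
        MeasureTheory.volume 0 (2 * Real.pi) := hcont.intervalIntegrable _ _
    set L : A →L[ℂ] ℂ := φ.toContinuousLinearMap with hL
    have hLφ : ∀ a : A, L a = φ a := fun a => rfl
    calc φ (∮ z in C(lam, r), g z)
        = L (∫ θ in (0:ℝ)..2 * Real.pi, deriv (circleMap lam r) θ • g (circleMap lam r θ)) :=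
          rfl
      _ = ∫ θ in (0:ℝ)..2 * Real.pi,
            L (deriv (circleMap lam r) θ • g (circleMap lam r θ)) :=
          (L.intervalIntegral_comp_comm hint).symm
      _ = ∫ θ in (0:ℝ)..2 * Real.pi,
            deriv (circleMap lam r) θ • (circleMap lam r θ - φ f)⁻¹ := by
          apply intervalIntegral.integral_congr
          intro θ _
          simp only [ContinuousLinearMap.map_smul]
          rw [hLφ, hφg _ (circleMap_mem_sphere _ hr.le _)]
      _ = ∮ z in C(lam, r), (z - φ f)⁻¹ := rfl
  -- the character realizing lam
  obtain ⟨ψ, hψ⟩ := WeakDual.CharacterSpace.mem_spectrum_iff_exists.mp hmem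
  set Ψ : A →ₐ[ℂ] ℂ := WeakDual.CharacterSpace.equivAlgHom ψ with hΨ
  have hΨf : Ψ f = lam := hψ
  set p : A := ∮ z in C(lam, r), g z with hp
  have hΨp : Ψ p = 2 * Real.pi * Complex.I := by
    rw [hp, key Ψ, hΨf]
    exact circleIntegral.integral_sub_inv_of_mem_ball (mem_ball_self hr)
  -- every point evaluation kills p
  have hTp : T p = 0 := by
    funext x
    set φ : A →ₐ[ℂ] ℂ := (Pi.evalAlgHom ℂ (fun _ => ℂ) x).comp T with hφ
    have hφf : φ f = T f x := rfl
    have hμ : φ f ∈ spectrum ℂ f := AlgHom.apply_mem_spectrum φ f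
    have hμne : φ f ≠ lam := by rw [hφf]; exact h x
    have hμU : φ f ∉ U := fun hin => hUspec _ hin hμne hμ
    have hμball : φ f ∉ closedBall lam r := by
      intro hin
      exact hμU (hball (lt_of_le_of_lt (mem_closedBall.mp hin) hrε))
    have hzero : (∮ z in C(lam, r), (z - φ f)⁻¹) = 0 := by
      apply circleIntegral_eq_zero_of_differentiable_on_off_countable hr.le
        Set.countable_empty
      · intro z hz
        have hzne : z ≠ φ f := fun hz' => hμball (hz' ▸ hz)
        have hd : DifferentiableAt ℂ (fun w : ℂ => (w - φ f)⁻¹) z :=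
          (differentiableAt_id.sub_const _).inv (sub_ne_zero.mpr hzne)
        exact hd.continuousAt.continuousWithinAt
      · intro z hz
        have hzne : z ≠ φ f := fun hz' => hμball (hz' ▸ ball_subset_closedBall hz.1)
        exact (differentiableAt_id.sub_const _).inv (sub_ne_zero.mpr hzne)
    have : φ p = 0 := by rw [hp, key φ, hzero]
    simpa [hφ] using this
  have hp0 : p = 0 := hT (by rw [hTp, map_zero])
  rw [hp0, map_zero] at hΨp
  have : (2 * Real.pi * Complex.I : ℂ) ≠ 0 := by
    simp [Real.pi_ne_zero, Complex.I_ne_zero]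
  exact this hΨp.symm
end

section
/- Let A be a commutative unital semisimple Banach algebra of bounded complex functions on a set G (pointwise operations, evaluations are characters). If f ∈ A and σ(f) is not contained in the closure of f(G), then σ(f) contains a nonempty perfect subset of ℂ, and in particular σ(f) has the cardinality of the continuum. -/
/-!
If `w ∈ σ(f)` is isolated, the Riesz idempotent `e = ∮ (z - f)⁻¹ dz` over a small circle around
`w` is sent by a character `χ` to `∮ (z - χ f)⁻¹ dz`, which is `2πi` for a character with
`χ f = w` and `0` for every evaluation at a point `g` with `f g ≠ w`. Injectivity of
`A → (G → ℂ)` then forces `w ∈ f(G)`. Hence no point of `σ(f) \ closure f(G)` is isolated in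
`σ(f)`, so the closure of this set is a nonempty perfect subset of `σ(f)`, and a nonempty perfect
subset of `ℂ` has the cardinality of the continuum.
-/

open Set Metric Complex Cardinal Filter Topology

theorem ContinuousLinearMap.circleIntegral_comp_comm {E F : Type*} [NormedAddCommGroup E]
    [NormedSpace ℂ E] [CompleteSpace E] [NormedAddCommGroup F] [NormedSpace ℂ F] [CompleteSpace F]
    (L : E →L[ℂ] F) {f : ℂ → E} {c : ℂ} {R : ℝ} (hf : CircleIntegrable f c R) :
    ∮ z in C(c, R), L (f z) = L (∮ z in C(c, R), f z) := by
  simp only [circleIntegral, ← L.map_smul]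
  exact L.intervalIntegral_comp_comm hf.out

theorem circleIntegral_sub_inv_of_notMem_closedBall {c w : ℂ} {R : ℝ} (hR : 0 ≤ R)
    (hw : w ∉ closedBall c R) : ∮ z in C(c, R), (z - w)⁻¹ = 0 :=
  DiffContOnCl.circleIntegral_eq_zero hR <|
    ((differentiable_id.sub_const w).differentiableOn.diffContOnCl).inv fun z hz =>
      sub_ne_zero.2 <| by rintro rfl; exact hw (closure_ball_subset_closedBall hz)

theorem AlgHom.apply_resolvent {𝕜 A : Type*} [Field 𝕜] [Ring A] [Algebra 𝕜 A]
    (χ : A →ₐ[𝕜] 𝕜) {a : A} {z : 𝕜} (hz : z ∈ resolventSet 𝕜 a) :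
    χ (resolvent a z) = (z - χ a)⁻¹ := by
  rw [spectrum.resolvent_eq hz, map_units_inv]
  change (χ (algebraMap 𝕜 A z - a))⁻¹ = _
  rw [map_sub, AlgHomClass.commutes, Algebra.algebraMap_self_apply]

theorem Perfect.continuum_le_mk {α : Type*} [MetricSpace α] [CompleteSpace α] {P : Set α}
    (hP : Perfect P) (hne : P.Nonempty) : 𝔠 ≤ #P := by
  obtain ⟨j, hjP, -, hj⟩ := hP.exists_nat_bool_injection hne
  have := lift_mk_le_lift_mk_of_injective (β := P) (f := fun x => ⟨j x, hjP ⟨x, rfl⟩⟩)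
    fun x y hxy => hj (congrArg Subtype.val hxy)
  simpa [two_power_aleph0] using this

theorem AlgHom.apply_circleIntegral_resolvent {A : Type*} [NormedRing A] [NormedAlgebra ℂ A]
    [CompleteSpace A] (χ : A →ₐ[ℂ] ℂ) {a : A} {c : ℂ} {R : ℝ} (hR : 0 ≤ R)
    (hsphere : sphere c R ⊆ resolventSet ℂ a) :
    χ (∮ z in C(c, R), resolvent a z) = ∮ z in C(c, R), (z - χ a)⁻¹ := by
  have hint : CircleIntegrable (resolvent a) c R :=
    ContinuousOn.circleIntegrable hR fun z hz =>
      (spectrum.hasDerivAt_resolvent_const_left (hsphere hz)).continuousAt.continuousWithinAt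
  rw [← AlgHom.coe_toContinuousLinearMap, ← χ.toContinuousLinearMap.circleIntegral_comp_comm hint]
  refine circleIntegral.integral_congr hR fun z hz => ?_
  exact χ.apply_resolvent (hsphere hz)

theorem mem_range_of_not_accPt_spectrum {A G : Type*} [NormedCommRing A] [NormedAlgebra ℂ A]
    [CompleteSpace A] (T : A →ₐ[ℂ] (G → ℂ)) (hT : Function.Injective T) {f : A} {w : ℂ}
    (hw : w ∈ spectrum ℂ f) (hiso : ¬AccPt w (𝓟 (spectrum ℂ f))) : w ∈ range (T f) := by
  obtain ⟨ε, hε, hball⟩ : ∃ ε > 0, ∀ z ∈ ball w ε, z ≠ w → z ∉ spectrum ℂ f := by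
    simpa [accPt_iff_frequently, not_frequently, Metric.eventually_nhds_iff_ball] using hiso
  set r := ε / 2
  have hr : 0 < r := half_pos hε
  have hrε : closedBall w r ⊆ ball w ε := closedBall_subset_ball (half_lt_self hε)
  have hsphere : sphere w r ⊆ resolventSet ℂ f := fun z hz => of_not_not <|
    hball z (hrε (sphere_subset_closedBall hz)) (ne_of_mem_sphere hz hr.ne')
  by_contra hwT
  have hfar : ∀ g, T f g ∉ closedBall w r := fun g hg =>
    hball _ (hrε hg) (fun h => hwT ⟨g, h⟩)
      (AlgHom.apply_mem_spectrum ((Pi.evalAlgHom ℂ (fun _ => ℂ) g).comp T) f)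
  have hzero : ∮ z in C(w, r), resolvent f z = 0 := hT <| funext fun g => by
    simpa using (((Pi.evalAlgHom ℂ (fun _ => ℂ) g).comp T).apply_circleIntegral_resolvent
      hr.le hsphere).trans (circleIntegral_sub_inv_of_notMem_closedBall hr.le (hfar g))
  obtain ⟨ψ, hψ⟩ := WeakDual.CharacterSpace.mem_spectrum_iff_exists.mp hw
  have := (WeakDual.CharacterSpace.equivAlgHom ψ).apply_circleIntegral_resolvent hr.le hsphere
  rw [hzero, map_zero, WeakDual.CharacterSpace.equivAlgHom_coe, hψ,
    circleIntegral.integral_sub_inv_of_mem_ball (mem_ball_self hr)] at this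
  exact two_pi_I_ne_zero this.symm

theorem preperfect_spectrum_diff_closure_range {A G : Type*} [NormedCommRing A]
    [NormedAlgebra ℂ A] [CompleteSpace A] (T : A →ₐ[ℂ] (G → ℂ)) (hT : Function.Injective T)
    (f : A) : Preperfect (spectrum ℂ f \ closure (range (T f))) := by
  intro w ⟨hw, hwC⟩
  have hacc : AccPt w (𝓟 (spectrum ℂ f)) := by
    by_contra hiso
    exact hwC (subset_closure (mem_range_of_not_accPt_spectrum T hT hw hiso))
  simpa [sdiff_eq, inter_comm] using hacc.nhds_inter (isClosed_closure.isOpen_compl.mem_nhds hwC)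

theorem stmt1_general {A G : Type*} [NormedCommRing A] [NormedAlgebra ℂ A] [CompleteSpace A]
    (T : A →ₐ[ℂ] (G → ℂ)) (hT : Function.Injective T)
    (f : A) (h : ¬ spectrum ℂ f ⊆ closure (Set.range (T f))) :
    (∃ P : Set ℂ, P ⊆ spectrum ℂ f ∧ P.Nonempty ∧ Perfect P) ∧
      Cardinal.mk ↥(spectrum ℂ f) = Cardinal.continuum := by
  set P := closure (spectrum ℂ f \ closure (range (T f)))
  have hPf : P ⊆ spectrum ℂ f := closure_minimal sdiff_subset (spectrum.isClosed f)
  have hP : Perfect P := (preperfect_spectrum_diff_closure_range T hT f).perfect_closure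
  have hne : P.Nonempty := (sdiff_nonempty.2 h).closure
  refine ⟨⟨P, hPf, hne, hP⟩, le_antisymm ?_ ?_⟩
  · simpa [mk_complex] using mk_set_le (spectrum ℂ f)
  · exact (hP.continuum_le_mk hne).trans (mk_le_mk_of_subset hPf)

/-- In a commutative unital semisimple Banach algebra of complex-valued
functions on a set `G` (evaluations being characters), if the spectrum of `f` is not
contained in the closure of the range of `f`, then the spectrum contains a nonempty
perfect subset of `ℂ`; in particular it has the cardinality of the continuum. -/
theorem stmt1 {A G : Type*} [NormedCommRing A] [NormedAlgebra ℂ A] [CompleteSpace A]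
    [Nontrivial A]
    (T : A →ₐ[ℂ] (G → ℂ)) (hT : Function.Injective T)
    (f : A) (h : ¬ spectrum ℂ f ⊆ closure (Set.range (T f))) :
    (∃ P : Set ℂ, P ⊆ spectrum ℂ f ∧ P.Nonempty ∧ Perfect P) ∧
      Cardinal.mk ↥(spectrum ℂ f) = Cardinal.continuum :=
  stmt1_general T hT f h
end

section
/- Let M be a von Neumann algebra and let φ, ψ be bounded linear functionals in the predual M_*. Define φ₁ := zs(ψ)·φ and φ₂ := (1 − zs(ψ))·φ, where zs(ψ) is the central support projection of ψ. Then φ = φ₁ + φ₂, φ₁ is absolutely continuous with respect to ψ (zs(φ₁) ≤ zs(ψ)), φ₂ is singular to ψ (zs(φ₂)·zs(ψ) = 0), this decomposition is unique, and ‖φ‖ = ‖φ₁‖ + ‖φ₂‖. -/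
/-- A projection commuting with everything. -/
def IsCentralProjection {M : Type*} [NonUnitalRing M] [Star M] (z : M) : Prop :=
  z * z = z ∧ star z = z ∧ ∀ x : M, z * x = x * z

/-- `z` is the central support of the functional `φ`: the smallest central projection
such that `φ` vanishes on `(1 − z)M`, i.e. `φ(x z) = φ(x)` for all `x`. -/
def IsCentralSupport {M : Type*} [Ring M] [StarRing M] (φ : M → ℂ) (z : M) : Prop :=
  IsCentralProjection z ∧ (∀ x : M, φ (x * z) = φ x) ∧
    ∀ z' : M, IsCentralProjection z' → (∀ x : M, φ (x * z') = φ x) → z * z' = z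

/-!
Every `x` splits as `x z + x (1 - z)`, which gives both the decomposition and its uniqueness.
For the norm, `z` being a central projection makes `a z` and `b (1 - z)` orthogonal in the sense
`(a z)⋆ (b (1 - z)) = 0 = (a z) (b (1 - z))⋆`, so by the C⋆-identity the norm of their sum is the
maximum of their norms. Rotating the phases of unit vectors `x`, `y` so that `φ (x z)` and
`φ (y (1 - z))` are nonnegative reals then shows `‖φ (x z)‖ + ‖φ (y (1 - z))‖ ≤ ‖φ‖`, i.e.
`‖φ₁‖ + ‖φ₂‖ ≤ ‖φ‖`.
-/

namespace IsCentralProjection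

variable {R : Type*} [Ring R] [StarRing R] {z : R}

theorem isStarProjection (hz : IsCentralProjection z) : IsStarProjection z :=
  ⟨hz.1, hz.2.1⟩

theorem star_mul_mul_one_sub_eq_zero (hz : IsCentralProjection z) (a b : R) :
    star (a * z) * (b * (1 - z)) = 0 := by
  rw [star_mul, hz.2.1, hz.2.2, mul_assoc, ← mul_assoc z, hz.2.2 b, mul_assoc,
    hz.isStarProjection.mul_one_sub_self, mul_zero, mul_zero]

theorem mul_mul_star_mul_one_sub_eq_zero (hz : IsCentralProjection z) (a b : R) :
    a * z * star (b * (1 - z)) = 0 := by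
  rw [star_mul, hz.isStarProjection.one_sub.isSelfAdjoint.star_eq, mul_assoc, ← mul_assoc z,
    hz.isStarProjection.mul_one_sub_self, zero_mul, mul_zero]

end IsCentralProjection

theorem norm_add_eq_max_of_star_mul_eq_zero {A : Type*} [NonUnitalCStarAlgebra A] {a b : A}
    (h₁ : star a * b = 0) (h₂ : a * star b = 0) : ‖a + b‖ = max ‖a‖ ‖b‖ := by
  have hsq : ‖a + b‖ * ‖a + b‖ = max (‖a‖ * ‖a‖) (‖b‖ * ‖b‖) := by
    have h₃ : star b * a = 0 := by simpa using congr(star $h₁)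
    have h₄ : star a * a * (star b * b) = 0 := by
      rw [mul_assoc, ← mul_assoc a, h₂, zero_mul, mul_zero]
    rw [← CStarRing.norm_star_mul_self, star_add, add_mul, mul_add, mul_add, h₁, h₃, add_zero,
      zero_add, (IsSelfAdjoint.star_mul_self a).norm_add_eq_max (.star_mul_self b) h₄,
      CStarRing.norm_star_mul_self, CStarRing.norm_star_mul_self]
  rw [← mul_self_inj (norm_nonneg _) (le_max_of_le_left (norm_nonneg a)), hsq]
  rcases le_total ‖a‖ ‖b‖ with h | h
  · rw [max_eq_right h, max_eq_right (mul_self_le_mul_self (norm_nonneg a) h)]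
  · rw [max_eq_left h, max_eq_left (mul_self_le_mul_self (norm_nonneg b) h)]

namespace ContinuousLinearMap

section Decomposition

variable {𝕜 A E : Type*} [NontriviallyNormedField 𝕜] [NormedRing A] [NormedAlgebra 𝕜 A]
  [NormedAddCommGroup E] [NormedSpace 𝕜 E]

theorem comp_mulRight_add_comp_mulRight_one_sub (φ : A →L[𝕜] E) (p : A) :
    φ.comp ((mul 𝕜 A).flip p) + φ.comp ((mul 𝕜 A).flip (1 - p)) = φ := by
  ext x
  simp only [add_apply, comp_apply, flip_apply, mul_apply', ← map_add, ← mul_add,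
    add_sub_cancel, mul_one]

theorem comp_mulRight_apply_mul_one_sub {p : A} (hp : IsIdempotentElem p) (φ : A →L[𝕜] E)
    (x : A) : φ.comp ((mul 𝕜 A).flip p) (x * (1 - p)) = 0 := by
  simp only [comp_apply, flip_apply, mul_apply', mul_assoc, hp.one_sub_mul_self, mul_zero,
    map_zero]

theorem comp_mulRight_one_sub_apply_mul {p : A} (hp : IsIdempotentElem p) (φ : A →L[𝕜] E)
    (x : A) : φ.comp ((mul 𝕜 A).flip (1 - p)) (x * p) = 0 := by
  simp only [comp_apply, flip_apply, mul_apply', mul_assoc, hp.mul_one_sub_self, mul_zero,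
    map_zero]

theorem comp_mulRight_eq_self {φ : A →L[𝕜] E} {p : A} (h : ∀ x, φ (x * (1 - p)) = 0) :
    φ.comp ((mul 𝕜 A).flip p) = φ := by
  conv_rhs => rw [← comp_mulRight_add_comp_mulRight_one_sub φ p]
  ext x
  simp only [add_apply, comp_apply, flip_apply, mul_apply', h, add_zero]

theorem eq_comp_mulRight_of_eq_add {φ ρ₁ ρ₂ : A →L[𝕜] E} {p : A} (h : φ = ρ₁ + ρ₂)
    (h₁ : ∀ x, ρ₁ (x * (1 - p)) = 0) (h₂ : ∀ x, ρ₂ (x * p) = 0) :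
    ρ₁ = φ.comp ((mul 𝕜 A).flip p) := by
  conv_lhs => rw [← comp_mulRight_eq_self h₁]
  ext x
  simp only [h, comp_apply, flip_apply, mul_apply', add_apply, h₂, add_zero]

theorem eq_comp_mulRight_one_sub_of_eq_add {φ ρ₁ ρ₂ : A →L[𝕜] E} {p : A} (h : φ = ρ₁ + ρ₂)
    (h₁ : ∀ x, ρ₁ (x * (1 - p)) = 0) (h₂ : ∀ x, ρ₂ (x * p) = 0) :
    ρ₂ = φ.comp ((mul 𝕜 A).flip (1 - p)) :=
  eq_comp_mulRight_of_eq_add (h.trans (add_comm _ _)) (by simpa using h₂) h₁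

end Decomposition

section Norm

variable {A : Type*} [CStarAlgebra A] {z : A}

theorem norm_apply_mul_add_norm_apply_mul_one_sub_le (φ : A →L[ℂ] ℂ)
    (hz : IsCentralProjection z) (x y : A) (hx : ‖x‖ ≤ 1) (hy : ‖y‖ ≤ 1) :
    ‖φ (x * z)‖ + ‖φ (y * (1 - z))‖ ≤ ‖φ‖ := by
  obtain ⟨α, hα, hαφ⟩ := Complex.exists_norm_eq_mul_self (φ (x * z))
  obtain ⟨β, hβ, hβφ⟩ := Complex.exists_norm_eq_mul_self (φ (y * (1 - z)))
  set w := (α • x) * z + (β • y) * (1 - z)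
  have hφw : φ w = ((‖φ (x * z)‖ + ‖φ (y * (1 - z))‖ : ℝ) : ℂ) := by
    simp only [w, map_add, smul_mul_assoc, map_smul, smul_eq_mul, hαφ, hβφ, Complex.ofReal_add]
  have hw : ‖w‖ ≤ 1 := by
    rw [norm_add_eq_max_of_star_mul_eq_zero (hz.star_mul_mul_one_sub_eq_zero _ _)
      (hz.mul_mul_star_mul_one_sub_eq_zero _ _)]
    refine max_le ?_ ?_
    · simpa using norm_mul_le_of_le (by rwa [norm_smul, hα, one_mul] : ‖α • x‖ ≤ 1)
        hz.isStarProjection.norm_le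
    · simpa using norm_mul_le_of_le (by rwa [norm_smul, hβ, one_mul] : ‖β • y‖ ≤ 1)
        hz.isStarProjection.one_sub.norm_le
  calc ‖φ (x * z)‖ + ‖φ (y * (1 - z))‖ = ‖φ w‖ := by
        rw [hφw, Complex.norm_real, Real.norm_of_nonneg (by positivity)]
    _ ≤ ‖φ‖ * ‖w‖ := φ.le_opNorm w
    _ ≤ ‖φ‖ := mul_le_of_le_one_right (norm_nonneg φ) hw

theorem norm_comp_mulRight_add_norm_comp_mulRight_one_sub_le (φ : A →L[ℂ] ℂ)
    (hz : IsCentralProjection z) :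
    ‖φ.comp ((mul ℂ A).flip z)‖ + ‖φ.comp ((mul ℂ A).flip (1 - z))‖ ≤ ‖φ‖ := by
  have hxy := norm_apply_mul_add_norm_apply_mul_one_sub_le φ hz
  have h₁ (y : A) (hy : ‖y‖ ≤ 1) : ‖φ.comp ((mul ℂ A).flip z)‖ ≤ ‖φ‖ - ‖φ (y * (1 - z))‖ :=
    opNorm_le_of_unit_norm (by simpa using hxy 0 y (by simp) hy) fun x hx => by
      show ‖φ (x * z)‖ ≤ _
      linarith [hxy x y hx.le hy]
  have h₂ : ‖φ.comp ((mul ℂ A).flip (1 - z))‖ ≤ ‖φ‖ - ‖φ.comp ((mul ℂ A).flip z)‖ :=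
    opNorm_le_of_unit_norm (sub_nonneg.2 (by simpa using h₁ 0 (by simp))) fun y hy => by
      show ‖φ (y * (1 - z))‖ ≤ _
      linarith [h₁ y hy.le]
  linarith

theorem norm_eq_norm_comp_mulRight_add_norm_comp_mulRight_one_sub (φ : A →L[ℂ] ℂ)
    (hz : IsCentralProjection z) :
    ‖φ‖ = ‖φ.comp ((mul ℂ A).flip z)‖ + ‖φ.comp ((mul ℂ A).flip (1 - z))‖ := by
  refine le_antisymm ?_ (norm_comp_mulRight_add_norm_comp_mulRight_one_sub_le φ hz)
  conv_lhs => rw [← comp_mulRight_add_comp_mulRight_one_sub φ z]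
  exact norm_add_le _ _

end Norm

end ContinuousLinearMap

/-- Lebesgue decomposition with respect to a central support. With
`z = zs(ψ)`, setting `φ₁ = zψ·φ = φ(·z)` and `φ₂ = (1−z)·φ`, one has `φ = φ₁ + φ₂`,
`φ₁ ≪ ψ` (it vanishes on `(1−z)M`), `φ₂ ⊥ ψ` (it vanishes on `zM`), the decomposition
is unique, and `‖φ‖ = ‖φ₁‖ + ‖φ₂‖`. -/
theorem stmt4 {M : Type*} [NormedRing M] [StarRing M] [CStarRing M] [NormedAlgebra ℂ M]
    [StarModule ℂ M] [CompleteSpace M]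
    (φ ψ : M →L[ℂ] ℂ) (z : M) (hz : IsCentralSupport (⇑ψ) z) :
    φ = φ.comp ((ContinuousLinearMap.mul ℂ M).flip z)
        + φ.comp ((ContinuousLinearMap.mul ℂ M).flip (1 - z)) ∧
    (∀ x : M, φ.comp ((ContinuousLinearMap.mul ℂ M).flip z) (x * (1 - z)) = 0) ∧
    (∀ x : M, φ.comp ((ContinuousLinearMap.mul ℂ M).flip (1 - z)) (x * z) = 0) ∧
    (∀ ρ₁ ρ₂ : M →L[ℂ] ℂ, φ = ρ₁ + ρ₂ → (∀ x : M, ρ₁ (x * (1 - z)) = 0) →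
      (∀ x : M, ρ₂ (x * z) = 0) →
      ρ₁ = φ.comp ((ContinuousLinearMap.mul ℂ M).flip z) ∧
        ρ₂ = φ.comp ((ContinuousLinearMap.mul ℂ M).flip (1 - z))) ∧
    ‖φ‖ = ‖φ.comp ((ContinuousLinearMap.mul ℂ M).flip z)‖
        + ‖φ.comp ((ContinuousLinearMap.mul ℂ M).flip (1 - z))‖ := by
  obtain ⟨hzc, -, -⟩ := hz
  let _ : CStarAlgebra M := {}
  have hp := hzc.isStarProjection.isIdempotentElem
  open ContinuousLinearMap in
  exact ⟨(comp_mulRight_add_comp_mulRight_one_sub φ z).symm,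
    comp_mulRight_apply_mul_one_sub hp φ, comp_mulRight_one_sub_apply_mul hp φ,
    fun _ _ h h₁ h₂ => ⟨eq_comp_mulRight_of_eq_add h h₁ h₂,
      eq_comp_mulRight_one_sub_of_eq_add h h₁ h₂⟩,
    norm_eq_norm_comp_mulRight_add_norm_comp_mulRight_one_sub φ hzc⟩
end

section
/- Let G be a group and suppose gH ∖ X ⊆ S, where H is an infinite subgroup of G, X is a finite subset, g ∈ G, and S = {x_k, x_k⁻¹ : k ∈ ℕ} is the set of the free generators of the free group F_∞ together with their inverses (G = F_∞). Then a contradiction follows; i.e., the set {x_k^{±1} : k ∈ ℕ} of generators and inverse generators of the free group on countably many generators does not almost contain any coset of an infinite subgroup (does not contain gH ∖ X for any infinite subgroup H, finite X, g ∈ F_∞). -/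
/-!
If `a` and `c` lie in a left coset `gH`, so does `c * a⁻¹ * c`. When `a = x_i^{±1}` and
`c = x_k^{±1}` with `k ≠ i`, this is a reduced word of length three, hence not a generator or an
inverse generator, and distinct `c` give distinct words. So an infinite coset almost contained in
`{x_k^{±1}}` would force infinitely many elements of the coset into the finite exceptional set.
-/

open scoped Pointwise

theorem mul_inv_mul_mem_smul_subgroup {G : Type*} [Group G] {H : Subgroup G} {g a c : G}
    (ha : a ∈ g • (H : Set G)) (hc : c ∈ g • (H : Set G)) :
    c * a⁻¹ * c ∈ g • (H : Set G) := by
  obtain ⟨h, hh, rfl⟩ := ha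
  obtain ⟨h', hh', rfl⟩ := hc
  refine ⟨h' * h⁻¹ * h', H.mul_mem (H.mul_mem hh' (H.inv_mem hh)) hh', ?_⟩
  simp only [smul_eq_mul]
  group

namespace FreeGroup

variable {α : Type*}

theorem range_of_union_range_inv_of :
    Set.range (of : α → FreeGroup α) ∪ Set.range (fun k => (of k)⁻¹) =
      Set.range (fun p : α × Bool => mk [p]) := by
  ext x
  constructor
  · rintro (⟨k, rfl⟩ | ⟨k, rfl⟩)
    exacts [⟨(k, true), rfl⟩, ⟨(k, false), rfl⟩]
  · rintro ⟨⟨k, _ | _⟩, rfl⟩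
    exacts [Or.inr ⟨k, rfl⟩, Or.inl ⟨k, rfl⟩]

variable [DecidableEq α]

theorem toWord_mk_mul_inv_mk_mul_mk {p q : α × Bool} (h : p.1 ≠ q.1) :
    (mk [p] * (mk [q])⁻¹ * mk [p]).toWord = [p, (q.1, !q.2), p] := by
  obtain ⟨k, s⟩ := p
  obtain ⟨i, t⟩ := q
  simp [inv_mk, invRev, mul_mk, toWord_mk, reduce, h, h.symm]

theorem mk_mul_inv_mk_mul_mk_notMem_range {p q : α × Bool} (h : p.1 ≠ q.1) :
    mk [p] * (mk [q])⁻¹ * mk [p] ∉ Set.range (fun r : α × Bool => mk [r]) := by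
  rintro ⟨r, hr⟩
  have hlength := congrArg (List.length ∘ toWord) hr
  simp only [Function.comp_apply, toWord_mk_mul_inv_mk_mul_mk h, toWord_mk, reduce_singleton]
    at hlength
  simp at hlength

theorem injOn_mk_mul_inv_mk_mul_mk (q : α × Bool) :
    Set.InjOn (fun p => mk [p] * (mk [q])⁻¹ * mk [p]) {p | p.1 ≠ q.1} := by
  intro p hp p' hp' hpp'
  have hword := congrArg toWord hpp'
  simp only [toWord_mk_mul_inv_mk_mul_mk hp, toWord_mk_mul_inv_mk_mul_mk hp'] at hword
  exact (List.cons.inj hword).1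

end FreeGroup

/-- The set `{x_k^{±1}} ⊆ F_∞` of free generators of the free group on
countably many generators together with their inverses does not almost contain any coset
of an infinite subgroup: for every infinite subgroup `H`, every `g` and every finite set
`X`, `gH ∖ X` is not contained in it. -/
theorem stmt11 (H : Subgroup (FreeGroup ℕ)) (hH : (H : Set (FreeGroup ℕ)).Infinite)
    (g : FreeGroup ℕ) (X : Set (FreeGroup ℕ)) (hX : X.Finite) :
    ¬ (g • (H : Set (FreeGroup ℕ)) \ X ⊆
        Set.range (FreeGroup.of : ℕ → FreeGroup ℕ) ∪
          Set.range (fun k : ℕ => (FreeGroup.of k)⁻¹)) := by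
  rw [FreeGroup.range_of_union_range_inv_of]
  intro hsub
  set P : Set (ℕ × Bool) := {p | FreeGroup.mk [p] ∈ g • (H : Set (FreeGroup ℕ)) \ X}
  have hP : P.Infinite := by
    refine Set.Infinite.of_image (fun p => FreeGroup.mk [p]) ?_
    convert (hH.smul_set (a := g)).sdiff hX
    exact Set.image_preimage_eq_of_subset hsub
  obtain ⟨q, hq⟩ := hP.nonempty
  set P' := P \ {q.1} ×ˢ Set.univ
  have hP' : P'.Infinite := hP.sdiff ((Set.finite_singleton q.1).prod Set.finite_univ)
  have hP'q : P' ⊆ {p | p.1 ≠ q.1} := fun p hp => by simpa using hp.2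
  have hmaps : Set.MapsTo (fun p => FreeGroup.mk [p] * (FreeGroup.mk [q])⁻¹ * FreeGroup.mk [p])
      P' X := by
    intro p hp
    by_contra hpX
    refine FreeGroup.mk_mul_inv_mk_mul_mk_notMem_range (hP'q hp) (hsub ⟨?_, hpX⟩)
    exact mul_inv_mul_mem_smul_subgroup hq.1 hp.1.1
  exact hP' ((hX.subset hmaps.image_subset).of_finite_image
    ((FreeGroup.injOn_mk_mul_inv_mk_mul_mk q).mono hP'q))
end
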